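/- Define the k-linear map tr: Z(Γ) → k on the basis by tr(e_i) = 0, tr(a^{i,j}) = 0, tr(c·e_i) = 1 for all i,j ∈ Γ_0. Then: (i) tr(xy) = tr(yx) for all x,y ∈ Z(Γ); (ii) the bilinear form ⟨x,y⟩ := tr(xy) on Z(Γ) is nondegenerate, symmetric and associative; (iii) the map φ: Z(Γ) → Z(Γ)* given by φ(a) = ⟨a,−⟩ is a (Z(Γ),Z(Γ))-bimodule isomorphism homogeneous of degree −2, with φ(e_i) = (c·e_i)*, φ(a^{i,j}) = (a^{j,i})*, and φ(c·e_i) = e_i*. In particular Z(Γ) is a graded symmetric algebra with d = 2. -/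

import Mathlib

/-!
Statement 12 (Lemma `zigfacts`(v)–(vii)): the trace form of the zigzag algebra.
For the `k`-linear map `tr : Z(Γ) → k` defined on the standard basis by
`tr(e_i) = 0`, `tr(a^{i,j}) = 0`, `tr(c e_i) = 1`:
(i) `tr(xy) = tr(yx)`;
(ii) the bilinear form `⟨x,y⟩ = tr(xy)` is nondegenerate, symmetric and associative;
(iii) `φ : x ↦ ⟨x,-⟩` is a bimodule isomorphism `Z(Γ) → Z(Γ)*` homogeneous of
degree `-2`, with `φ(e_i) = (c e_i)*`, `φ(a^{i,j}) = (a^{j,i})*`, `φ(c e_i) = e_i*`.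
In particular `Z(Γ)` is a graded symmetric algebra with `d = 2`.
-/

noncomputable section

variable (k : Type*) [CommRing k]
variable (V : Type*) [Fintype V] [DecidableEq V] (G : SimpleGraph V) [DecidableRel G.Adj]

/-- Generators of the zigzag algebra `Z(Γ)` of a graph `Γ`: the idempotents `e_i`
(`i` a vertex), the arrows `a^{i,j} : j → i` (`{i,j}` an edge, one arrow for each
orientation), and the length-two cycles `c_i` based at `i`. -/
inductive ZigGen : Type _
  | e : V → ZigGen
  | a : (p : V × V) → G.Adj p.1 p.2 → ZigGen
  | c : V → ZigGen

open FreeAlgebra in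
/-- The defining relations of the zigzag algebra: the `e_i` are orthogonal
idempotents summing to `1`; `a^{i,j}` is a path from `j` to `i`; all paths of
length `≥ 3` vanish; length-two paths which are not cycles vanish; all length-two
cycles at a vertex `i` are equal (to `c_i`). -/
inductive ZigRel : FreeAlgebra k (ZigGen V G) → FreeAlgebra k (ZigGen V G) → Prop
  | ee (i j : V) :
      ZigRel (ι k (.e i) * ι k (.e j)) (if i = j then ι k (.e i) else 0)
  | esum : ZigRel (∑ i : V, ι k (.e i)) 1
  | ea (i : V) (p : V × V) (h : G.Adj p.1 p.2) :
      ZigRel (ι k (.e i) * ι k (.a p h)) (if i = p.1 then ι k (.a p h) else 0)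
  | ae (p : V × V) (h : G.Adj p.1 p.2) (j : V) :
      ZigRel (ι k (.a p h) * ι k (.e j)) (if j = p.2 then ι k (.a p h) else 0)
  | aa (p : V × V) (h : G.Adj p.1 p.2) (q : V × V) (h' : G.Adj q.1 q.2) :
      ZigRel (ι k (.a p h) * ι k (.a q h'))
        (if p.2 = q.1 ∧ p.1 = q.2 then ι k (.c p.1) else 0)
  | ec (i j : V) :
      ZigRel (ι k (.e i) * ι k (.c j)) (if i = j then ι k (.c j) else 0)
  | ce (j i : V) :
      ZigRel (ι k (.c j) * ι k (.e i)) (if i = j then ι k (.c j) else 0)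
  | ca (j : V) (p : V × V) (h : G.Adj p.1 p.2) :
      ZigRel (ι k (.c j) * ι k (.a p h)) 0
  | ac (p : V × V) (h : G.Adj p.1 p.2) (j : V) :
      ZigRel (ι k (.a p h) * ι k (.c j)) 0
  | cc (i j : V) : ZigRel (ι k (.c i) * ι k (.c j)) 0

/-- The zigzag algebra `Z(Γ)` of the graph `Γ`, presented by generators and
relations. -/
abbrev ZigAlg := RingQuot (ZigRel k V G)

/-- The idempotent `e_i ∈ Z(Γ)`. -/
noncomputable def eZ (i : V) : ZigAlg k V G :=
  RingQuot.mkAlgHom k (ZigRel k V G) (FreeAlgebra.ι k (.e i))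

/-- The arrow `a^{i,j} ∈ Z(Γ)` (a path from `j` to `i`), for an edge `{i,j}`. -/
noncomputable def aZ (p : V × V) (h : G.Adj p.1 p.2) : ZigAlg k V G :=
  RingQuot.mkAlgHom k (ZigRel k V G) (FreeAlgebra.ι k (.a p h))

/-- The length-two cycle `c e_i = c_i ∈ Z(Γ)`. -/
noncomputable def cZ (i : V) : ZigAlg k V G :=
  RingQuot.mkAlgHom k (ZigRel k V G) (FreeAlgebra.ι k (.c i))

/-- Path-length degree of the generators of the zigzag algebra. -/
def zigDeg : ZigGen V G → ℕ
  | .e _ => 0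
  | .a _ _ => 1
  | .c _ => 2

/-- The degree-`m` homogeneous component of the zigzag algebra for the path-length
grading: the span of the images of products of generators of total degree `m`. -/
noncomputable def ZigComp (m : ℕ) : Submodule k (ZigAlg k V G) :=
  Submodule.span k {x | ∃ L : List (ZigGen V G),
    (L.map (zigDeg V G)).sum = m ∧
    x = (L.map (fun g => RingQuot.mkAlgHom k (ZigRel k V G) (FreeAlgebra.ι k g))).prod}

/-- The family `{e_i} ∪ {a^{i,j}} ∪ {c e_i}`, which is the standard basis of the
zigzag algebra. -/
noncomputable def zigFam :
    (V ⊕ {p : V × V // G.Adj p.1 p.2} ⊕ V) → ZigAlg k V G :=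
  Sum.elim (fun i => eZ k V G i)
    (Sum.elim (fun p => aZ k V G p.1 p.2) (fun i => cZ k V G i))

end

/-- The map `Φ : Z(Γ) → Z(Γ)*`, `Φ(x)(y) = tr(x y)`, associated with a trace `tr`. -/
noncomputable def zigPhi (k : Type*) [CommRing k]
    (V : Type*) [Fintype V] [DecidableEq V]
    (G : SimpleGraph V) [DecidableRel G.Adj]
    (tr : ZigAlg k V G →ₗ[k] k) :
    ZigAlg k V G →ₗ[k] Module.Dual k (ZigAlg k V G) where
  toFun x := tr ∘ₗ LinearMap.mulLeft k x
  map_add' x x' := by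
    ext y; simp [LinearMap.mulLeft_apply, add_mul]
  map_smul' c x := by
    ext y; simp [LinearMap.mulLeft_apply, smul_mul_assoc]

/-!
The trace pairs the standard basis with itself: `tr (B s * B t)` is `1` when `t` is the dual
index of `s` (`e_i ↔ c e_i`, `a^{i,j} ↔ a^{j,i}`) and `0` otherwise. Since this index map is an
involution the Gram matrix is symmetric, which gives `tr (xy) = tr (yx)`, and `φ` sends the
basis onto a permutation of the dual basis, so it is bijective. For the grading, a product of
generators is either `0` or a single generator of the total degree, and `tr` kills every
generator of degree other than `2`, as well as `1 = ∑ e_i`.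
-/

open Module

section TraceForm

variable {R A ι : Type*} [CommRing R] [Ring A] [Algebra R A] [DecidableEq ι]
  {B : Basis ι R A} {tr : A →ₗ[R] R} {σ : ι → ι}

lemma trace_mul_comm_of_basis_pairing (hσ : Function.Involutive σ)
    (hB : ∀ s t, tr (B s * B t) = if t = σ s then 1 else 0) (x y : A) :
    tr (x * y) = tr (y * x) := by
  have hform : (LinearMap.mul R A).compr₂ tr = (LinearMap.mul R A).flip.compr₂ tr :=
    LinearMap.ext_basis B B fun s t => by
      simp only [LinearMap.compr₂_apply, LinearMap.mul_apply', LinearMap.flip_apply, hB]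
      exact if_congr ⟨fun h => by rw [h, hσ], fun h => by rw [h, hσ]⟩ rfl rfl
  simpa using LinearMap.congr_fun₂ hform x y

lemma mul_compr₂_apply_basis (hB : ∀ s t, tr (B s * B t) = if t = σ s then 1 else 0)
    (s : ι) :
    (LinearMap.mul R A).compr₂ tr (B s) = B.coord (σ s) :=
  B.ext fun t => by
    rw [LinearMap.compr₂_apply, LinearMap.mul_apply', hB, Basis.coord_apply, Basis.repr_self,
      Finsupp.single_apply]

lemma mul_compr₂_bijective_of_basis_pairing [Finite ι] (hσ : Function.Bijective σ)
    (hB : ∀ s t, tr (B s * B t) = if t = σ s then 1 else 0) :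
    Function.Bijective ((LinearMap.mul R A).compr₂ tr) := by
  have : (LinearMap.mul R A).compr₂ tr = (B.equiv B.dualBasis (Equiv.ofBijective σ hσ)) :=
    B.ext fun s => by simp [mul_compr₂_apply_basis hB, Basis.equiv_apply]
  rw [this]
  exact LinearEquiv.bijective _

end TraceForm

section ZigDual

variable {V : Type*} {G : SimpleGraph V}

def zigDual :
    V ⊕ {p : V × V // G.Adj p.1 p.2} ⊕ V → V ⊕ {p : V × V // G.Adj p.1 p.2} ⊕ V
  | .inl i => .inr (.inr i)
  | .inr (.inl p) => .inr (.inl ⟨(p.1.2, p.1.1), p.2.symm⟩)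
  | .inr (.inr i) => .inl i

lemma zigDual_involutive : Function.Involutive (zigDual (V := V) (G := G)) := by
  rintro (i | p | i) <;> rfl

end ZigDual

section Zigzag

variable {k : Type*} [CommRing k]
variable {V : Type*} [Fintype V] [DecidableEq V] {G : SimpleGraph V}
variable {tr : ZigAlg k V G →ₗ[k] k}

local notation "mk" =>
  fun g : ZigGen V G => RingQuot.mkAlgHom k (ZigRel k V G) (FreeAlgebra.ι k g)

lemma mkAlgHom_mul_of_zigRel {x y z : FreeAlgebra k (ZigGen V G)}
    (h : ZigRel k V G (x * y) z) :
    RingQuot.mkAlgHom k (ZigRel k V G) x * RingQuot.mkAlgHom k (ZigRel k V G) y =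
      RingQuot.mkAlgHom k (ZigRel k V G) z := by
  rw [← map_mul, RingQuot.mkAlgHom_rel k h]

lemma eZ_mul_eZ (i j : V) :
    eZ k V G i * eZ k V G j = if i = j then eZ k V G i else 0 := by
  simpa [eZ, apply_ite] using mkAlgHom_mul_of_zigRel (ZigRel.ee (k := k) (G := G) i j)

lemma eZ_mul_aZ (i : V) (p : V × V) (h : G.Adj p.1 p.2) :
    eZ k V G i * aZ k V G p h = if i = p.1 then aZ k V G p h else 0 := by
  simpa [eZ, aZ, apply_ite] using mkAlgHom_mul_of_zigRel (ZigRel.ea (k := k) i p h)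

lemma aZ_mul_eZ (p : V × V) (h : G.Adj p.1 p.2) (j : V) :
    aZ k V G p h * eZ k V G j = if j = p.2 then aZ k V G p h else 0 := by
  simpa [eZ, aZ, apply_ite] using mkAlgHom_mul_of_zigRel (ZigRel.ae (k := k) p h j)

lemma aZ_mul_aZ (p : V × V) (h : G.Adj p.1 p.2) (q : V × V) (h' : G.Adj q.1 q.2) :
    aZ k V G p h * aZ k V G q h' = if p.2 = q.1 ∧ p.1 = q.2 then cZ k V G p.1 else 0 := by
  simpa [aZ, cZ, apply_ite] using mkAlgHom_mul_of_zigRel (ZigRel.aa (k := k) p h q h')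

lemma eZ_mul_cZ (i j : V) :
    eZ k V G i * cZ k V G j = if i = j then cZ k V G j else 0 := by
  simpa [eZ, cZ, apply_ite] using mkAlgHom_mul_of_zigRel (ZigRel.ec (k := k) (G := G) i j)

lemma cZ_mul_eZ (j i : V) :
    cZ k V G j * eZ k V G i = if i = j then cZ k V G j else 0 := by
  simpa [eZ, cZ, apply_ite] using mkAlgHom_mul_of_zigRel (ZigRel.ce (k := k) (G := G) j i)

lemma cZ_mul_aZ (j : V) (p : V × V) (h : G.Adj p.1 p.2) : cZ k V G j * aZ k V G p h = 0 := by
  simpa [aZ, cZ] using mkAlgHom_mul_of_zigRel (ZigRel.ca (k := k) j p h)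

lemma aZ_mul_cZ (p : V × V) (h : G.Adj p.1 p.2) (j : V) : aZ k V G p h * cZ k V G j = 0 := by
  simpa [aZ, cZ] using mkAlgHom_mul_of_zigRel (ZigRel.ac (k := k) p h j)

lemma cZ_mul_cZ (i j : V) : cZ k V G i * cZ k V G j = 0 := by
  simpa [cZ] using mkAlgHom_mul_of_zigRel (ZigRel.cc (k := k) (G := G) i j)

lemma sum_eZ : ∑ i : V, eZ k V G i = 1 := by
  simpa [eZ] using RingQuot.mkAlgHom_rel k (ZigRel.esum (k := k) (G := G))

lemma mk_mul_mk (g g' : ZigGen V G) :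
    mk g * mk g' = 0 ∨
      ∃ g'', zigDeg V G g'' = zigDeg V G g + zigDeg V G g' ∧ mk g * mk g' = mk g'' := by
  -- `ZigRel` has exactly one constructor rewriting each product of two generators
  rcases g with i | ⟨p, h⟩ | i <;> rcases g' with j | ⟨q, h'⟩ | j <;>
    rw [mkAlgHom_mul_of_zigRel (by constructor)] <;> (try split_ifs) <;>
    first
    | exact Or.inl (map_zero _)
    | exact Or.inr ⟨_, rfl, rfl⟩

lemma list_prod_mk_eq_zero_or_mk (g : ZigGen V G) (L : List (ZigGen V G)) :
    ((g :: L).map mk).prod = 0 ∨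
      ∃ g', zigDeg V G g' = ((g :: L).map (zigDeg V G)).sum ∧
        ((g :: L).map mk).prod = mk g' := by
  induction L generalizing g with
  | nil => exact Or.inr ⟨g, by simp, by simp⟩
  | cons g₁ L ih =>
    rw [List.map_cons, List.prod_cons]
    rcases ih g₁ with h0 | ⟨g', hdeg, hprod⟩
    · exact Or.inl (by rw [h0, mul_zero])
    rw [hprod]
    rcases mk_mul_mk (k := k) g g' with h0 | ⟨g'', hdeg', hmul⟩
    · exact Or.inl h0
    · refine Or.inr ⟨g'', ?_, hmul⟩
      simp only [List.map_cons, List.sum_cons] at hdeg ⊢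
      omega

lemma zigComp_mul_le (m n : ℕ) : ZigComp k V G m * ZigComp k V G n ≤ ZigComp k V G (m + n) := by
  rw [ZigComp, ZigComp, Submodule.span_mul_span]
  apply Submodule.span_mono
  rintro _ ⟨_, ⟨L, hL, rfl⟩, _, ⟨L', hL', rfl⟩, rfl⟩
  exact ⟨L ++ L', by simp [hL, hL'], by simp⟩

lemma tr_one_eq_zero (htre : ∀ i, tr (eZ k V G i) = 0) : tr 1 = 0 := by
  simp [← sum_eZ, htre]

lemma tr_list_prod_mk_eq_zero (htre : ∀ i, tr (eZ k V G i) = 0)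
    (htra : ∀ (p : V × V) (h : G.Adj p.1 p.2), tr (aZ k V G p h) = 0)
    {L : List (ZigGen V G)} (hL : (L.map (zigDeg V G)).sum ≠ 2) :
    tr (L.map mk).prod = 0 := by
  cases L with
  | nil => exact tr_one_eq_zero htre
  | cons g L =>
    rcases list_prod_mk_eq_zero_or_mk (k := k) g L with h0 | ⟨g', hdeg, hprod⟩
    · rw [h0, map_zero]
    rw [hprod]
    cases g' with
    | e i => exact htre i
    | a p h => exact htra p h
    | c i => exact (hL (hdeg.symm.trans rfl)).elim

lemma tr_eq_zero_of_mem_zigComp (htre : ∀ i, tr (eZ k V G i) = 0)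
    (htra : ∀ (p : V × V) (h : G.Adj p.1 p.2), tr (aZ k V G p h) = 0)
    {n : ℕ} (hn : n ≠ 2) {x : ZigAlg k V G} (hx : x ∈ ZigComp k V G n) : tr x = 0 := by
  induction hx using Submodule.span_induction with
  | mem x hx =>
    obtain ⟨L, hL, rfl⟩ := hx
    exact tr_list_prod_mk_eq_zero htre htra (hL ▸ hn)
  | zero => exact map_zero tr
  | add _ _ _ _ hx hy => rw [map_add, hx, hy, add_zero]
  | smul a _ _ hx => rw [map_smul, hx, smul_zero]

lemma tr_zigFam_mul_zigFam (htre : ∀ i, tr (eZ k V G i) = 0)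
    (htra : ∀ (p : V × V) (h : G.Adj p.1 p.2), tr (aZ k V G p h) = 0)
    (htrc : ∀ i, tr (cZ k V G i) = 1) (s t : V ⊕ {p : V × V // G.Adj p.1 p.2} ⊕ V) :
    tr (zigFam k V G s * zigFam k V G t) = if t = zigDual s then 1 else 0 := by
  rcases s with i | ⟨p, hp⟩ | i <;> rcases t with j | ⟨q, hq⟩ | j <;>
    simp [zigFam, zigDual, eZ_mul_eZ, eZ_mul_aZ, aZ_mul_eZ, aZ_mul_aZ, eZ_mul_cZ, cZ_mul_eZ,
      cZ_mul_aZ, aZ_mul_cZ, cZ_mul_cZ, apply_ite tr, htre, htra, htrc, eq_comm, Prod.ext_iff]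

end Zigzag

theorem stmt12_general
    (k : Type*) [CommRing k]
    (V : Type*) [Fintype V] [DecidableEq V]
    (G : SimpleGraph V) [DecidableRel G.Adj]
    -- the standard basis of `Z(Γ)`
    (B : Module.Basis (V ⊕ {p : V × V // G.Adj p.1 p.2} ⊕ V) k (ZigAlg k V G))
    (hB : ∀ s, B s = zigFam k V G s)
    -- the trace map, defined on the basis by
    -- `tr(e_i) = 0`, `tr(a^{i,j}) = 0`, `tr(c e_i) = 1`
    (tr : ZigAlg k V G →ₗ[k] k)
    (htre : ∀ i, tr (eZ k V G i) = 0)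
    (htra : ∀ (p : V × V) (h : G.Adj p.1 p.2), tr (aZ k V G p h) = 0)
    (htrc : ∀ i, tr (cZ k V G i) = 1) :
    -- (i) `tr (xy) = tr (yx)`
    (∀ x y : ZigAlg k V G, tr (x * y) = tr (y * x)) ∧
    -- (ii) the form `⟨x,y⟩ := tr (xy)` is nondegenerate, symmetric and associative
    ((∀ x : ZigAlg k V G, (∀ y, tr (x * y) = 0) → x = 0) ∧
      (∀ x y : ZigAlg k V G, tr (x * y) = tr (y * x)) ∧
      (∀ x y z : ZigAlg k V G, tr ((x * y) * z) = tr (x * (y * z)))) ∧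
    -- (iii) `φ = zigPhi tr : Z(Γ) → Z(Γ)*` is a bimodule isomorphism of degree `-2`
    (Function.Bijective (zigPhi k V G tr) ∧
      -- bimodule homomorphism: `φ(a x b)(y) = φ(x)(b y a)`
      (∀ a x b y : ZigAlg k V G,
        zigPhi k V G tr (a * x * b) y = zigPhi k V G tr x (b * y * a)) ∧
      -- homogeneous of degree `-2`
      (∀ (m s : ℕ) (x y : ZigAlg k V G), x ∈ ZigComp k V G m → y ∈ ZigComp k V G s →
        m + s ≠ 2 → zigPhi k V G tr x y = 0) ∧
      -- values on the basis: `φ(e_i) = (c e_i)*`, `φ(a^{i,j}) = (a^{j,i})*`,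
      -- `φ(c e_i) = e_i*`
      (∀ i, zigPhi k V G tr (eZ k V G i) = B.coord (Sum.inr (Sum.inr i))) ∧
      (∀ (p : V × V) (h : G.Adj p.1 p.2),
        zigPhi k V G tr (aZ k V G p h)
          = B.coord (Sum.inr (Sum.inl ⟨(p.2, p.1), h.symm⟩))) ∧
      (∀ i, zigPhi k V G tr (cZ k V G i) = B.coord (Sum.inl i))) := by
  have hpairing : ∀ s t, tr (B s * B t) = if t = zigDual s then 1 else 0 := fun s t => by
    rw [hB, hB]
    exact tr_zigFam_mul_zigFam htre htra htrc s t
  have hcomm := trace_mul_comm_of_basis_pairing zigDual_involutive hpairing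
  have hbij : Function.Bijective (zigPhi k V G tr) :=
    mul_compr₂_bijective_of_basis_pairing zigDual_involutive.bijective hpairing
  have hphi_zigFam : ∀ s, zigPhi k V G tr (zigFam k V G s) = B.coord (zigDual s) := fun s =>
    hB s ▸ mul_compr₂_apply_basis hpairing s
  refine ⟨hcomm, ⟨fun x hx => hbij.1 ?_, hcomm, fun x y z => by rw [mul_assoc]⟩, hbij,
    fun a x b y => ?_, fun m s x y hx hy hms => ?_, fun i => hphi_zigFam (.inl i),
    fun p h => hphi_zigFam (.inr (.inl ⟨p, h⟩)), fun i => hphi_zigFam (.inr (.inr i))⟩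
  · rw [map_zero]
    exact LinearMap.ext hx
  · show tr (a * x * b * y) = tr (x * (b * y * a))
    rw [mul_assoc, mul_assoc, hcomm a]
    simp only [mul_assoc]
  · exact tr_eq_zero_of_mem_zigComp htre htra hms
      (zigComp_mul_le m s (Submodule.mul_mem_mul hx hy))

theorem stmt12
    (k : Type*) [CommRing k] [IsNoetherianRing k]
    (V : Type*) [Fintype V] [DecidableEq V]
    (G : SimpleGraph V) [DecidableRel G.Adj]
    (hconn : G.Connected)
    -- the standard basis of `Z(Γ)`
    (B : Module.Basis (V ⊕ {p : V × V // G.Adj p.1 p.2} ⊕ V) k (ZigAlg k V G))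
    (hB : ∀ s, B s = zigFam k V G s)
    -- the trace map, defined on the basis by
    -- `tr(e_i) = 0`, `tr(a^{i,j}) = 0`, `tr(c e_i) = 1`
    (tr : ZigAlg k V G →ₗ[k] k)
    (htre : ∀ i, tr (eZ k V G i) = 0)
    (htra : ∀ (p : V × V) (h : G.Adj p.1 p.2), tr (aZ k V G p h) = 0)
    (htrc : ∀ i, tr (cZ k V G i) = 1) :
    -- (i) `tr (xy) = tr (yx)`
    (∀ x y : ZigAlg k V G, tr (x * y) = tr (y * x)) ∧
    -- (ii) the form `⟨x,y⟩ := tr (xy)` is nondegenerate, symmetric and associative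
    ((∀ x : ZigAlg k V G, (∀ y, tr (x * y) = 0) → x = 0) ∧
      (∀ x y : ZigAlg k V G, tr (x * y) = tr (y * x)) ∧
      (∀ x y z : ZigAlg k V G, tr ((x * y) * z) = tr (x * (y * z)))) ∧
    -- (iii) `φ = zigPhi tr : Z(Γ) → Z(Γ)*` is a bimodule isomorphism of degree `-2`
    (Function.Bijective (zigPhi k V G tr) ∧
      -- bimodule homomorphism: `φ(a x b)(y) = φ(x)(b y a)`
      (∀ a x b y : ZigAlg k V G,
        zigPhi k V G tr (a * x * b) y = zigPhi k V G tr x (b * y * a)) ∧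
      -- homogeneous of degree `-2`
      (∀ (m s : ℕ) (x y : ZigAlg k V G), x ∈ ZigComp k V G m → y ∈ ZigComp k V G s →
        m + s ≠ 2 → zigPhi k V G tr x y = 0) ∧
      -- values on the basis: `φ(e_i) = (c e_i)*`, `φ(a^{i,j}) = (a^{j,i})*`,
      -- `φ(c e_i) = e_i*`
      (∀ i, zigPhi k V G tr (eZ k V G i) = B.coord (Sum.inr (Sum.inr i))) ∧
      (∀ (p : V × V) (h : G.Adj p.1 p.2),
        zigPhi k V G tr (aZ k V G p h)
          = B.coord (Sum.inr (Sum.inl ⟨(p.2, p.1), h.symm⟩))) ∧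
      (∀ i, zigPhi k V G tr (cZ k V G i) = B.coord (Sum.inl i))) :=
  stmt12_general k V G B hB tr htre htra htrc
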